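/- Let T be a finite tree with maximum degree at most 4 and φ an s-model of T. If the ordered edge (p,v) of T is critical in φ, then b^ℓ_T(p,v) = b^ℓ_φ(p,v). -/

import Mathlib

open SimpleGraph

/-- The closed axis-parallel grid segment (bounding box) with corners `p` and `q`.
For axis-aligned `p`, `q` this is exactly the straight segment joining them. -/
def seg (p q : ℤ × ℤ) : Set (ℤ × ℤ) :=
  {r | r.1 ∈ Set.uIcc p.1 q.1 ∧ r.2 ∈ Set.uIcc p.2 q.2}

/-- A straight model (s-model) of a graph `G`: an injective drawing of the vertices on the
grid `ℤ × ℤ` such that every edge is a horizontal or vertical straight segment, and segments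
of distinct edges meet only at the image of a common endpoint. -/
structure SModel {V : Type*} (G : SimpleGraph V) where
  toFun : V → ℤ × ℤ
  inj : Function.Injective toFun
  axisAligned : ∀ ⦃u v : V⦄, G.Adj u v →
    ((toFun u).1 = (toFun v).1 ∧ (toFun u).2 ≠ (toFun v).2) ∨
    ((toFun u).2 = (toFun v).2 ∧ (toFun u).1 ≠ (toFun v).1)
  noCross : ∀ ⦃u v x y : V⦄, G.Adj u v → G.Adj x y → s(u, v) ≠ s(x, y) →
    ∀ r ∈ seg (toFun u) (toFun v) ∩ seg (toFun x) (toFun y),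
      ∃ w : V, (w = u ∨ w = v) ∧ (w = x ∨ w = y) ∧ toFun w = r

/-- The drawing `φ` bends at `b` when passing `a, b, c`: one of the two segments is
vertical and the other horizontal. -/
def bendAt {V : Type*} (φ : V → ℤ × ℤ) (a b c : V) : Prop :=
  ((φ a).1 = (φ b).1 ∧ (φ b).2 = (φ c).2) ∨
  ((φ a).2 = (φ b).2 ∧ (φ b).1 = (φ c).1)

instance {V : Type*} (φ : V → ℤ × ℤ) (a b c : V) : Decidable (bendAt φ a b c) := by
  unfold bendAt; infer_instance

/-- The list of internal vertices, in order, at which the drawing of the given vertex list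
bends. -/
def bendVertices {V : Type*} (φ : V → ℤ × ℤ) : List V → List V
  | a :: b :: c :: rest =>
      (if bendAt φ a b c then [b] else []) ++ bendVertices φ (b :: c :: rest)
  | _ => []

/-- The number of bends of (the drawing of) a vertex list. -/
def bends {V : Type*} (φ : V → ℤ × ℤ) (L : List V) : ℕ :=
  (bendVertices φ L).length

section Defs

variable {V : Type*} [Fintype V]

/-- `b(φ)`: the maximum number of bends over all leaf-to-leaf paths (0 if there are none). -/
noncomputable def bendNum {G : SimpleGraph V} [DecidableRel G.Adj] (M : SModel G) : ℕ :=
  sSup {n | ∃ (a b : V) (W : G.Walk a b), W.IsPath ∧ G.degree a = 1 ∧ G.degree b = 1 ∧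
    bends M.toFun W.support = n}

/-- `b(T)`: the minimum of `b(φ)` over all s-models `φ`. -/
noncomputable def treeBendNum (G : SimpleGraph V) [DecidableRel G.Adj] : ℕ :=
  sInf {n | ∃ M : SModel G, bendNum M = n}

/-- `b^ℓ_φ(p, v)`: the maximum number of bends over all paths from `p` to a leaf that
contain `v`. -/
noncomputable def leafBend {G : SimpleGraph V} [DecidableRel G.Adj] (M : SModel G)
    (p v : V) : ℕ :=
  sSup {n | ∃ (f : V) (W : G.Walk p f), W.IsPath ∧ G.degree f = 1 ∧ v ∈ W.support ∧
    bends M.toFun W.support = n}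

/-- `b^ℓ_T(p, v)`: the minimum of `b^ℓ_φ(p, v)` over all s-models `φ`. -/
noncomputable def leafBendMin (G : SimpleGraph V) [DecidableRel G.Adj] (p v : V) : ℕ :=
  sInf {n | ∃ M : SModel G, leafBend M p v = n}

/-- `b_φ(v)`: the maximum number of bends over all leaf-to-leaf paths containing `v`. -/
noncomputable def bendNumAt {G : SimpleGraph V} [DecidableRel G.Adj] (M : SModel G)
    (v : V) : ℕ :=
  sSup {n | ∃ (a b : V) (W : G.Walk a b), W.IsPath ∧ G.degree a = 1 ∧ G.degree b = 1 ∧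
    v ∈ W.support ∧ bends M.toFun W.support = n}

/-- `p`, `q`, `r` lie on a common horizontal or vertical grid line. -/
def collinearGrid (p q r : ℤ × ℤ) : Prop :=
  (p.1 = q.1 ∧ q.1 = r.1) ∨ (p.2 = q.2 ∧ q.2 = r.2)

/-- `v` is balanced in the s-model `M`: either it has degree at most 1, or two neighbors
realizing the two largest values of `b^ℓ_M(v, ·)` are drawn collinearly with `v`. -/
def BalancedAt {G : SimpleGraph V} [DecidableRel G.Adj] (M : SModel G) (v : V) : Prop :=
  G.degree v ≤ 1 ∨
  ∃ u1 u2 : V, u1 ≠ u2 ∧ G.Adj v u1 ∧ G.Adj v u2 ∧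
    collinearGrid (M.toFun u1) (M.toFun v) (M.toFun u2) ∧
    ∀ w : V, G.Adj v w → w ≠ u1 → w ≠ u2 →
      leafBend M v w ≤ min (leafBend M v u1) (leafBend M v u2)

/-- The value `b^ℓ_M(v, u)` of a real or virtual (`none`) neighbor `u` of `v`; virtual
neighbors have value `-1`. -/
noncomputable def optVal {G : SimpleGraph V} [DecidableRel G.Adj] (M : SModel G) (v : V) :
    Option V → ℤ
  | none => -1
  | some u => (leafBend M v u : ℤ)

/-- `u1` and `u2` are the first two entries of a nonincreasing (w.r.t. `b^ℓ_M(v, ·)`)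
ordering of the real neighbors of `v` other than `p`, padded at the end with virtual
neighbors `none`. -/
def TopTwo {G : SimpleGraph V} [DecidableRel G.Adj] (M : SModel G) (p v : V) :
    Option V → Option V → Prop
  | none, u2 => u2 = none ∧ ∀ w, G.Adj v w → w = p
  | some a, none => G.Adj v a ∧ a ≠ p ∧ ∀ w, G.Adj v w → w ≠ p → w = a
  | some a, some b => G.Adj v a ∧ a ≠ p ∧ G.Adj v b ∧ b ≠ p ∧ a ≠ b ∧
      leafBend M v b ≤ leafBend M v a ∧
      ∀ w, G.Adj v w → w ≠ p → w ≠ a → w ≠ b → leafBend M v w ≤ leafBend M v b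

/-- Criticality of an ordered pair in an s-model `M`: every pair `(p, ∅)` is critical, and an
ordered edge `(p, v)` is critical if, for the first two entries `u1, u2` of some nonincreasing
ordering of the other neighbors of `v`, either `b^ℓ_M(p,v) = b^1` and `(v, u1)` is critical, or
`b^ℓ_M(p,v) = b^2 + 1` and both `(v, u1)` and `(v, u2)` are critical. -/
inductive Critical {G : SimpleGraph V} [DecidableRel G.Adj] (M : SModel G) :
    V → Option V → Prop
  | base (p : V) : Critical M p none
  | top1 (p v : V) (u1 u2 : Option V) (hadj : G.Adj p v)
      (htop : TopTwo M p v u1 u2)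
      (hb : (leafBend M p v : ℤ) = optVal M v u1)
      (hc : Critical M v u1) : Critical M p (some v)
  | top2 (p v : V) (u1 u2 : Option V) (hadj : G.Adj p v)
      (htop : TopTwo M p v u1 u2)
      (hb : (leafBend M p v : ℤ) = optVal M v u2 + 1)
      (hc1 : Critical M v u1) (hc2 : Critical M v u2) : Critical M p (some v)

end Defs

/-- Membership in the class of trees of the statement: a tree with maximum degree at most 4
having a vertex `r` of degree exactly 2 with distinct neighbors `r1`, `r2`, admitting a
balanced s-model `M` with `b^ℓ_M(r,r1) = b^ℓ_M(r,r2) = k - 1`. -/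
def ClassProp (k : ℕ) (V : Type) [Fintype V] (G : SimpleGraph V)
    [DecidableRel G.Adj] : Prop :=
  G.IsTree ∧ (∀ v, G.degree v ≤ 4) ∧
  ∃ (r r1 r2 : V) (M : SModel G),
    G.degree r = 2 ∧ G.Adj r r1 ∧ G.Adj r r2 ∧ r1 ≠ r2 ∧
    (∀ v, BalancedAt M v) ∧ leafBend M r r1 = k - 1 ∧ leafBend M r r2 = k - 1

/-- The full binary tree of height `k`, with vertex set the lists over `Bool` of length at
most `k`, rooted at the empty list; children of `l` are the lists `c :: l`. -/
def fullBinTree (k : ℕ) : SimpleGraph {l : List Bool // l.length ≤ k} :=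
  SimpleGraph.fromRel (fun a b => ∃ c : Bool, (b : List Bool) = c :: (a : List Bool))

/-- A tree with maximum degree at most 4 and minimum bend number `k`. -/
def TreeProp (k : ℕ) (V : Type) [Fintype V] (G : SimpleGraph V)
    [DecidableRel G.Adj] : Prop :=
  G.IsTree ∧ (∀ v, G.degree v ≤ 4) ∧ treeBendNum G = k

/-- The grid graph on `ℤ × ℤ`: two grid points are adjacent iff their distance is 1. -/
def gridGraph : SimpleGraph (ℤ × ℤ) :=
  SimpleGraph.fromRel (fun p q =>
    (p.1 = q.1 ∧ (p.2 - q.2).natAbs = 1) ∨ (p.2 = q.2 ∧ (p.1 - q.1).natAbs = 1))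

/-- `G` is a `B_k`-EPG graph: it has an EPG model by grid paths each with at most `k` bends;
distinct vertices are adjacent iff the corresponding grid paths share a grid edge. -/
def IsBkEPG {X : Type*} (G : SimpleGraph X) (k : ℕ) : Prop :=
  ∃ (s t : X → ℤ × ℤ) (P : ∀ x : X, gridGraph.Walk (s x) (t x)),
    (∀ x, (P x).IsPath) ∧ (∀ x, bends (id : ℤ × ℤ → ℤ × ℤ) (P x).support ≤ k) ∧
    ∀ x y : X, x ≠ y → (G.Adj x y ↔ ∃ e, e ∈ (P x).edges ∧ e ∈ (P y).edges)

/-- `⟨T, (Q x)_{x}⟩` is a VPT model of `G`: the `Q x` are pairwise distinct paths of the host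
tree `T`, and distinct vertices of `G` are adjacent iff their paths share a vertex of `T`. -/
def IsVPTModel {X W : Type*} (G : SimpleGraph X) (T : SimpleGraph W)
    (s t : X → W) (Q : ∀ x : X, T.Walk (s x) (t x)) : Prop :=
  (∀ x, (Q x).IsPath) ∧
  (∀ x y : X, x ≠ y → {w : W | w ∈ (Q x).support} ≠ {w : W | w ∈ (Q y).support}) ∧
  (∀ x y : X, x ≠ y → (G.Adj x y ↔ ∃ w : W, w ∈ (Q x).support ∧ w ∈ (Q y).support))

/-- A host tree with maximum degree at most 3 and minimum bend number `k`. -/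
def HostProp (k : ℕ) (W : Type) [Fintype W] (T : SimpleGraph W)
    [DecidableRel T.Adj] : Prop :=
  T.IsTree ∧ (∀ v, T.degree v ≤ 3) ∧ treeBendNum T = k

/-
Criticality propagates a lower bound: by induction on the derivation of `Critical M p u`, every
s-model `φ` satisfies `b^ℓ_φ(p, u) ≥ b^ℓ_M(p, u)`, so `M` attains the minimum `b^ℓ_T(p, v)`.
In the first rule this is monotonicity `b^ℓ_φ(v, u¹) ≤ b^ℓ_φ(p, v)`. In the second, `φ` cannot
draw both `vu¹` and `vu²` straight on from `pv`: two of three collinear segments at `v` would lie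
on the same side of `v` and overlap. So the path through one of `u¹`, `u²` bends at `v` and gains
a bend, which gives `b^ℓ_φ(p, v) ≥ min(b^ℓ_φ(v, u¹), b^ℓ_φ(v, u²)) + 1 ≥ b^ℓ_M(v, u²) + 1`.
-/
section Bends

variable {V : Type*} (φ : V → ℤ × ℤ)

theorem bends_cons_cons_cons (a b c : V) (rest : List V) :
    bends φ (a :: b :: c :: rest) =
      (if bendAt φ a b c then 1 else 0) + bends φ (b :: c :: rest) := by
  simp only [bends, bendVertices, List.length_append]
  split <;> simp

theorem bends_le_length : ∀ L : List V, bends φ L ≤ L.length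
  | [] | [_] | [_, _] => by simp [bends, bendVertices]
  | a :: b :: c :: rest => by
      have := bends_le_length (b :: c :: rest)
      rw [bends_cons_cons_cons]
      simp only [List.length_cons] at this ⊢
      split <;> omega

theorem bends_le_bends_cons (a : V) : ∀ L : List V, bends φ L ≤ bends φ (a :: L)
  | [] | [_] => by simp [bends, bendVertices]
  | b :: c :: rest => by rw [bends_cons_cons_cons]; omega

end Bends

namespace SimpleGraph.IsAcyclic

variable {V : Type*} {G : SimpleGraph V}

theorem exists_support_eq_cons_cons (hG : G.IsAcyclic) {v u f : V} (hvu : G.Adj v u)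
    {W : G.Walk v f} (hW : W.IsPath) (hu : u ∈ W.support) :
    ∃ rest, W.support = v :: u :: rest := by
  have hnil : ¬W.Nil := fun h => hvu.ne' (by simpa [Walk.nil_iff_support_eq.mp h] using hu)
  have hsnd : W.snd = u := (hG.eq_snd_of_adj_start hW hvu hu).symm
  refine ⟨W.tail.support.tail, ?_⟩
  calc W.support = v :: W.tail.support := (W.cons_support_tail hnil).symm
    _ = v :: W.snd :: W.tail.support.tail := by rw [W.tail.cons_tail_support]
    _ = v :: u :: W.tail.support.tail := congrArg (fun x => v :: x :: W.tail.support.tail) hsnd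

theorem notMem_support_of_adj (hG : G.IsAcyclic) {p v u f : V} (hvp : G.Adj v p)
    (hvu : G.Adj v u) (hpu : p ≠ u) {W : G.Walk v f} (hW : W.IsPath) (hu : u ∈ W.support) :
    p ∉ W.support := fun hp =>
  hpu ((hG.eq_snd_of_adj_start hW hvp hp).trans (hG.eq_snd_of_adj_start hW hvu hu).symm)

variable [Fintype V] [DecidableRel G.Adj]

theorem exists_isPath_degree_eq_one_of_isPath (hG : G.IsAcyclic) {f v : V} (W : G.Walk f v)
    (hW : W.IsPath) (hnil : ¬W.Nil) :
    ∃ (l : V) (W' : G.Walk l v), W'.IsPath ∧ G.degree l = 1 ∧ W.support ⊆ W'.support := by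
  by_cases hf : G.degree f = 1
  · exact ⟨f, W, hW, hf, fun _ h => h⟩
  have hsnd : W.snd ∈ G.neighborFinset f := (G.mem_neighborFinset _ _).mpr (W.adj_snd hnil)
  have hdeg : 1 < G.degree f := by
    have := Finset.card_pos.mpr ⟨_, hsnd⟩
    rw [card_neighborFinset_eq_degree] at this
    omega
  obtain ⟨w, hw, hwsnd⟩ := Finset.exists_mem_ne hdeg W.snd
  have hfw : G.Adj f w := (G.mem_neighborFinset _ _).mp hw
  have hwW : w ∉ W.support := fun h => hwsnd (hG.eq_snd_of_adj_start hW hfw h)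
  have hW' : (Walk.cons hfw.symm W).IsPath := hW.cons hwW
  obtain ⟨l, W'', hW'', hl, hsub⟩ :=
    hG.exists_isPath_degree_eq_one_of_isPath _ hW' Walk.not_nil_cons
  exact ⟨l, W'', hW'', hl, fun x hx => hsub (by simp [hx])⟩
termination_by Fintype.card V - W.length
decreasing_by
  have := hW'.length_lt
  simp only [Walk.length_cons] at this ⊢
  omega

theorem exists_isPath_degree_eq_one_of_adj (hG : G.IsAcyclic) {v u : V} (hvu : G.Adj v u) :
    ∃ (f : V) (W : G.Walk v f), W.IsPath ∧ G.degree f = 1 ∧ u ∈ W.support := by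
  have hW : (Walk.cons hvu.symm Walk.nil).IsPath := by simp [hvu.ne']
  obtain ⟨f, W, hW', hf, hsub⟩ := hG.exists_isPath_degree_eq_one_of_isPath _ hW Walk.not_nil_cons
  exact ⟨f, W.reverse, hW'.reverse, hf, by simpa using hsub (by simp)⟩

end SimpleGraph.IsAcyclic

namespace SModel

variable {V : Type*} {G : SimpleGraph V}

theorem toFun_notMem_seg (φ : SModel G) {v a b : V} (hva : G.Adj v a) (hvb : G.Adj v b)
    (hab : a ≠ b) : φ.toFun a ∉ seg (φ.toFun v) (φ.toFun b) := by
  intro ha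
  have hne : s(v, a) ≠ s(v, b) := fun h => hab (Sym2.congr_right.mp h)
  obtain ⟨w, rfl | rfl, hw, hwa⟩ :=
    φ.noCross hva hvb hne _ ⟨⟨Set.right_mem_uIcc, Set.right_mem_uIcc⟩, ha⟩
  · exact hva.ne (φ.inj hwa)
  · exact hw.elim (fun h => hva.ne h.symm) hab

theorem bendAt_or_bendAt (φ : SModel G) {p v a b : V} (hpv : G.Adj p v) (hva : G.Adj v a)
    (hvb : G.Adj v b) (hpa : p ≠ a) (hpb : p ≠ b) (hab : a ≠ b) :
    bendAt φ.toFun p v a ∨ bendAt φ.toFun p v b := by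
  by_contra! hno
  -- Otherwise `p`, `a`, `b` lie on one grid line through `v`; two of them are on the same side
  -- of `v`, and the nearer one lies on the segment from `v` to the farther one.
  have key : φ.toFun a ∈ seg (φ.toFun v) (φ.toFun p) ∨ φ.toFun p ∈ seg (φ.toFun v) (φ.toFun a) ∨
      φ.toFun b ∈ seg (φ.toFun v) (φ.toFun p) ∨ φ.toFun p ∈ seg (φ.toFun v) (φ.toFun b) ∨
      φ.toFun a ∈ seg (φ.toFun v) (φ.toFun b) ∨ φ.toFun b ∈ seg (φ.toFun v) (φ.toFun a) := by
    have := φ.axisAligned hpv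
    have := φ.axisAligned hva
    have := φ.axisAligned hvb
    simp only [bendAt, seg, Set.mem_uIcc, Set.mem_ofPred_eq] at *
    omega
  have hvp := hpv.symm
  rcases key with h | h | h | h | h | h
  exacts [φ.toFun_notMem_seg hva hvp hpa.symm h, φ.toFun_notMem_seg hvp hva hpa h,
    φ.toFun_notMem_seg hvb hvp hpb.symm h, φ.toFun_notMem_seg hvp hvb hpb h,
    φ.toFun_notMem_seg hva hvb hab h, φ.toFun_notMem_seg hvb hva hab.symm h]

variable [Fintype V] [DecidableRel G.Adj] (φ : SModel G)

theorem le_leafBend {p v f : V} {W : G.Walk p f} (hW : W.IsPath) (hf : G.degree f = 1)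
    (hv : v ∈ W.support) : bends φ.toFun W.support ≤ leafBend φ p v := by
  refine le_csSup ⟨Fintype.card V, ?_⟩ ⟨f, W, hW, hf, hv, rfl⟩
  rintro _ ⟨f, W, hW, -, -, rfl⟩
  calc bends φ.toFun W.support ≤ W.support.length := bends_le_length _ _
    _ = W.length + 1 := W.length_support
    _ ≤ Fintype.card V := hW.length_lt

theorem exists_bends_eq_leafBend (hG : G.IsAcyclic) {p v : V} (hpv : G.Adj p v) :
    ∃ (f : V) (W : G.Walk p f), W.IsPath ∧ G.degree f = 1 ∧ v ∈ W.support ∧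
      bends φ.toFun W.support = leafBend φ p v := by
  obtain ⟨f, W, hW, hf, hv⟩ := hG.exists_isPath_degree_eq_one_of_adj hpv
  exact Nat.sSup_mem (s := {n | ∃ (f : V) (W : G.Walk p f), W.IsPath ∧ G.degree f = 1 ∧
      v ∈ W.support ∧ bends φ.toFun W.support = n})
    ⟨_, f, W, hW, hf, hv, rfl⟩ ⟨_, fun _ ⟨_, _, hW, hf, hv, h⟩ => h ▸ φ.le_leafBend hW hf hv⟩

theorem leafBend_le_leafBend (hG : G.IsAcyclic) {p v u : V} (hpv : G.Adj p v)
    (hvu : G.Adj v u) (hpu : p ≠ u) : leafBend φ v u ≤ leafBend φ p v := by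
  refine csSup_le' ?_
  rintro _ ⟨f, W, hW, hf, hu, rfl⟩
  have hpW := hG.notMem_support_of_adj hpv.symm hvu hpu hW hu
  calc bends φ.toFun W.support ≤ bends φ.toFun (p :: W.support) := bends_le_bends_cons _ _ _
    _ ≤ leafBend φ p v := φ.le_leafBend (W := .cons hpv W) (hW.cons hpW) hf (by simp)

theorem leafBend_add_one_le_of_bendAt (hG : G.IsAcyclic) {p v u : V} (hpv : G.Adj p v)
    (hvu : G.Adj v u) (hpu : p ≠ u) (hbend : bendAt φ.toFun p v u) :
    leafBend φ v u + 1 ≤ leafBend φ p v := by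
  obtain ⟨f, W, hW, hf, hu, hWb⟩ := φ.exists_bends_eq_leafBend hG hvu
  obtain ⟨rest, hrest⟩ := hG.exists_support_eq_cons_cons hvu hW hu
  have hpW := hG.notMem_support_of_adj hpv.symm hvu hpu hW hu
  have hle := φ.le_leafBend (v := v) (W := .cons hpv W) (hW.cons hpW) hf (by simp)
  rw [Walk.support_cons, hrest, bends_cons_cons_cons, if_pos hbend, ← hrest, hWb] at hle
  omega

end SModel

theorem Critical.optVal_le {V : Type*} [Fintype V] {G : SimpleGraph V} [DecidableRel G.Adj]
    (hG : G.IsAcyclic) {M : SModel G} (φ : SModel G) {p : V} {u : Option V}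
    (hc : Critical M p u) : optVal M p u ≤ optVal φ p u := by
  induction hc with
  | base q => exact le_rfl
  | top1 q w u1 u2 hqw htop hb _ ih =>
    cases u1 with
    | none => simp only [optVal] at hb ⊢; omega
    | some a =>
      obtain ⟨hwa, haq⟩ : G.Adj w a ∧ a ≠ q := by cases u2 <;> exact ⟨htop.1, htop.2.1⟩
      have := φ.leafBend_le_leafBend hG hqw hwa haq.symm
      simp only [optVal] at hb ih ⊢
      omega
  | top2 q w u1 u2 hqw htop hb _ _ ih1 ih2 =>
    cases u2 with
    | none => simp only [optVal] at hb ⊢; omega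
    | some b =>
      cases u1 with
      | none => exact absurd htop.1 (by simp)
      | some a =>
        obtain ⟨hwa, haq, hwb, hbq, hab, hba, -⟩ := htop
        simp only [optVal] at hb ih1 ih2 ⊢
        rcases φ.bendAt_or_bendAt hqw hwa hwb haq.symm hbq.symm hab with hbend | hbend
        · have := φ.leafBend_add_one_le_of_bendAt hG hqw hwa haq.symm hbend
          omega
        · have := φ.leafBend_add_one_le_of_bendAt hG hqw hwb hbq.symm hbend
          omega

theorem stmt_4_general {V : Type*} [Fintype V] (G : SimpleGraph V) [DecidableRel G.Adj]
    (hT : G.IsTree) (M : SModel G)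
    (p v : V) (hcrit : Critical M p (some v)) :
    leafBendMin G p v = leafBend M p v := by
  refine le_antisymm (Nat.sInf_le ⟨M, rfl⟩) (le_csInf ⟨_, M, rfl⟩ ?_)
  rintro _ ⟨φ, rfl⟩
  exact Int.ofNat_le.mp (hcrit.optVal_le hT.isAcyclic φ)

theorem stmt_4 {V : Type*} [Fintype V] (G : SimpleGraph V) [DecidableRel G.Adj]
    (hT : G.IsTree) (hdeg : ∀ v, G.degree v ≤ 4) (M : SModel G)
    (p v : V) (hpv : G.Adj p v) (hcrit : Critical M p (some v)) :
    leafBendMin G p v = leafBend M p v :=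
  stmt_4_general G hT M p v hcrit
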